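/- The boost order of a tensor with respect to a null direction ℓ is unchanged by frame transformations preserving that null direction: let T be a rank-r tensor on ℝ⁴, let ℓ be the covector with components (0,1,0,0), and let Λ be an η-orthogonal matrix whose induced action on covectors sends ℓ to c·ℓ for some c ≠ 0 (equivalently Λ_{2a} = c·δ_{a2} for all a). Then the boost order of Λ·T equals the boost order of T; in particular, it is invariant under boosts, spatial rotations, and null rotations about ℓ. -/

import Mathlib

open Matrix Classical

/-- The null-frame Minkowski metric on `ℝ⁴` as a matrix (indices 0,1,2,3 for 1,2,3,4). -/
noncomputable def etaM : Matrix (Fin 4) (Fin 4) ℝ :=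
  Matrix.of fun a b =>
    if (a = 0 ∧ b = 1) ∨ (a = 1 ∧ b = 0) then -1
    else if (a = 2 ∧ b = 2) ∨ (a = 3 ∧ b = 3) then 1 else 0

/-- The boost weight of a rank-`r` component index: the number of indices equal to 1 (here 0)
minus the number of indices equal to 2 (here 1). -/
def bw {r : ℕ} (a : Fin r → Fin 4) : ℤ :=
  ((Finset.univ.filter fun i => a i = 0).card : ℤ) -
    ((Finset.univ.filter fun i => a i = 1).card : ℤ)

/-- The boost order of a tensor: the maximum boost weight over nonzero components
(`⊥` for the zero tensor). -/
noncomputable def boostOrder {r : ℕ} (T : (Fin r → Fin 4) → ℝ) : WithBot ℤ :=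
  (Finset.univ.filter fun a => T a ≠ 0).sup fun a => ((bw a : ℤ) : WithBot ℤ)

/-- Action of a frame-transformation matrix on a rank-`r` tensor. -/
noncomputable def act {r : ℕ} (Λ : Matrix (Fin 4) (Fin 4) ℝ) (T : (Fin r → Fin 4) → ℝ) :
    (Fin r → Fin 4) → ℝ :=
  fun a => ∑ b : Fin r → Fin 4, (∏ i, Λ (b i) (a i)) * T b

/-!
Give the indices `1, 2, 3, 4` the weights `1, -1, 0, 0`. The hypothesis on `ℓ` says that the
second row of `Λ` is `c e₂`, and the `(1,1)` entry of `ΛᵀηΛ = η` then reads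
`Λ₃₁² + Λ₄₁² = 2 Λ₁₁ Λ₂₁ = 0`, so the first column of `Λ` is a multiple of `e₁`. Together this
means `Λ_{ba} ≠ 0` only when `w(a) ≤ w(b)`: every nonzero component of `Λ·T` comes from a
nonzero component of `T` of no smaller boost weight, and the boost order cannot increase.
The inverse `η Λᵀ η` of `Λ` has the same shape, so it cannot decrease either.
-/

def indexWeight : Fin 4 → ℤ := ![1, -1, 0, 0]

lemma bw_eq_sum_indexWeight {r : ℕ} (a : Fin r → Fin 4) : bw a = ∑ i, indexWeight (a i) := by
  have hweight : ∀ x : Fin 4,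
      ((if x = 0 then (1 : ℤ) else 0) - if x = 1 then 1 else 0) = indexWeight x := by
    decide
  simp only [bw, Finset.card_filter, Nat.cast_sum, Nat.cast_ite, Nat.cast_one, Nat.cast_zero,
    ← Finset.sum_sub_distrib, hweight]

def LowersBoostWeight (Λ : Matrix (Fin 4) (Fin 4) ℝ) : Prop :=
  ∀ a b, Λ b a ≠ 0 → indexWeight a ≤ indexWeight b

lemma lowersBoostWeight_iff (Λ : Matrix (Fin 4) (Fin 4) ℝ) :
    LowersBoostWeight Λ ↔ (∀ b, b ≠ 0 → Λ b 0 = 0) ∧ ∀ a, a ≠ 1 → Λ 1 a = 0 := by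
  constructor
  · intro h
    refine ⟨fun b hb => ?_, fun a ha => ?_⟩ <;> by_contra hne
    · have := h 0 b hne
      fin_cases b <;> simp_all [indexWeight]
    · have := h a 1 hne
      fin_cases a <;> simp_all [indexWeight]
  · rintro ⟨hcol, hrow⟩ a b hab
    fin_cases a <;> fin_cases b <;> simp_all [indexWeight]

lemma boostOrder_act_le {r : ℕ} {Λ : Matrix (Fin 4) (Fin 4) ℝ} (hΛ : LowersBoostWeight Λ)
    (T : (Fin r → Fin 4) → ℝ) : boostOrder (act Λ T) ≤ boostOrder T := by
  refine Finset.sup_le fun a ha => ?_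
  obtain ⟨b, -, hb⟩ := Finset.exists_ne_zero_of_sum_ne_zero (Finset.mem_filter.1 ha).2
  have hTb : b ∈ Finset.univ.filter fun b => T b ≠ 0 :=
    Finset.mem_filter.2 ⟨Finset.mem_univ b, right_ne_zero_of_mul hb⟩
  have hle : bw a ≤ bw b := by
    rw [bw_eq_sum_indexWeight, bw_eq_sum_indexWeight]
    exact Finset.sum_le_sum fun i _ =>
      hΛ _ _ (Finset.prod_ne_zero_iff.1 (left_ne_zero_of_mul hb) i (Finset.mem_univ i))
  exact (WithBot.coe_le_coe.2 hle).trans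
    (Finset.le_sup (f := fun a => ((bw a : ℤ) : WithBot ℤ)) hTb)

lemma act_act {r : ℕ} (Λ M : Matrix (Fin 4) (Fin 4) ℝ) (T : (Fin r → Fin 4) → ℝ) :
    act M (act Λ T) = act (Λ * M) T := by
  funext a
  simp only [act, Finset.mul_sum]
  rw [Finset.sum_comm]
  refine Finset.sum_congr rfl fun d _ => ?_
  calc ∑ b : Fin r → Fin 4, (∏ i, M (b i) (a i)) * ((∏ i, Λ (d i) (b i)) * T d)
      = (∑ b : Fin r → Fin 4, ∏ i, Λ (d i) (b i) * M (b i) (a i)) * T d := by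
        rw [Finset.sum_mul]
        refine Finset.sum_congr rfl fun b _ => ?_
        rw [Finset.prod_mul_distrib]
        ring
    _ = (∏ i, (Λ * M) (d i) (a i)) * T d := by
        simp only [Matrix.mul_apply, Finset.prod_univ_sum, Fintype.piFinset_univ]

lemma act_one {r : ℕ} (T : (Fin r → Fin 4) → ℝ) : act 1 T = T := by
  funext a
  unfold act
  rw [Finset.sum_eq_single_of_mem a (Finset.mem_univ a)]
  · simp
  · intro b _ hba
    obtain ⟨i, hi⟩ := Function.ne_iff.1 hba
    have hzero : (1 : Matrix (Fin 4) (Fin 4) ℝ) (b i) (a i) = 0 := Matrix.one_apply_ne hi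
    exact mul_eq_zero_of_left (Finset.prod_eq_zero (Finset.mem_univ i) hzero) _

lemma etaM_mul_etaM : etaM * etaM = 1 := by
  ext i j
  fin_cases i <;> fin_cases j <;> simp [etaM, Matrix.mul_apply]

lemma etaM_conj_mul_eq_one {Λ : Matrix (Fin 4) (Fin 4) ℝ} (hΛ : Λᵀ * etaM * Λ = etaM) :
    etaM * Λᵀ * etaM * Λ = 1 := by
  calc etaM * Λᵀ * etaM * Λ = etaM * (Λᵀ * etaM * Λ) := by simp only [Matrix.mul_assoc]
    _ = 1 := by rw [hΛ, etaM_mul_etaM]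

/-- Conjugation by `η` swaps the indices of weight `1` and `-1`, and transposition turns the
reversed inequality around again. -/
lemma LowersBoostWeight.etaM_conj_transpose {Λ : Matrix (Fin 4) (Fin 4) ℝ}
    (hΛ : LowersBoostWeight Λ) : LowersBoostWeight (etaM * Λᵀ * etaM) := by
  obtain ⟨hcol, hrow⟩ := (lowersBoostWeight_iff Λ).1 hΛ
  refine (lowersBoostWeight_iff _).2 ⟨fun b hb => ?_, fun a ha => ?_⟩
  · fin_cases b <;> simp_all [etaM, Matrix.mul_apply]
  · fin_cases a <;> simp_all [etaM, Matrix.mul_apply]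

lemma lowersBoostWeight_of_orthogonal {Λ : Matrix (Fin 4) (Fin 4) ℝ}
    (hΛ : Λᵀ * etaM * Λ = etaM) (hrow : ∀ a, a ≠ 1 → Λ 1 a = 0) : LowersBoostWeight Λ := by
  refine (lowersBoostWeight_iff Λ).2 ⟨?_, hrow⟩
  have h00 : Λ 2 0 ^ 2 + Λ 3 0 ^ 2 = 0 := by
    have := congrFun (congrFun hΛ 0) 0
    simp [etaM, Matrix.mul_apply, Fin.sum_univ_four, hrow 0 (by decide)] at this
    linarith
  have h2 : Λ 2 0 = 0 := by nlinarith [sq_nonneg (Λ 2 0), sq_nonneg (Λ 3 0)]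
  have h3 : Λ 3 0 = 0 := by nlinarith [sq_nonneg (Λ 2 0), sq_nonneg (Λ 3 0)]
  intro b hb
  fin_cases b <;> first | exact absurd rfl hb | exact hrow 0 (by decide) | assumption

theorem boostOrder_invariant_general {r : ℕ} (T : (Fin r → Fin 4) → ℝ)
    (Λ : Matrix (Fin 4) (Fin 4) ℝ) (hΛ : Λᵀ * etaM * Λ = etaM)
    (c : ℝ) (hrow : ∀ a : Fin 4, Λ 1 a = c * (if a = 1 then 1 else 0)) :
    boostOrder (act Λ T) = boostOrder T := by
  have hlow : LowersBoostWeight Λ :=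
    lowersBoostWeight_of_orthogonal hΛ fun a ha => by rw [hrow a, if_neg ha, mul_zero]
  have hinv : Λ * (etaM * Λᵀ * etaM) = 1 := mul_eq_one_comm.1 (etaM_conj_mul_eq_one hΛ)
  refine le_antisymm (boostOrder_act_le hlow T) ?_
  calc boostOrder T = boostOrder (act (etaM * Λᵀ * etaM) (act Λ T)) := by
        rw [act_act, hinv, act_one]
    _ ≤ boostOrder (act Λ T) := boostOrder_act_le hlow.etaM_conj_transpose _

/-- the boost order of a nonzero tensor with respect to the null direction
`ℓ = (0,1,0,0)` is invariant under `η`-orthogonal transformations whose induced action on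
covectors sends `ℓ` to `c·ℓ` with `c ≠ 0` (boosts, spatial rotations and null rotations
about `ℓ`). -/
theorem boostOrder_invariant {r : ℕ} (T : (Fin r → Fin 4) → ℝ) (hT : T ≠ 0)
    (Λ : Matrix (Fin 4) (Fin 4) ℝ) (hΛ : Λᵀ * etaM * Λ = etaM)
    (c : ℝ) (hc : c ≠ 0) (hrow : ∀ a : Fin 4, Λ 1 a = c * (if a = 1 then 1 else 0)) :
    boostOrder (act Λ T) = boostOrder T :=
  boostOrder_invariant_general T Λ hΛ c hrow
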